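/- Euler's second identity: for complex q, z with |q| < 1, ∑_{n=0}^∞ q^{n(n-1)/2} z^n / (q;q)_n = (-z;q)_∞, where the series converges for all z. -/

import Mathlib

/-!
Write `F(z) = ∑ qⁿ⁽ⁿ⁻¹⁾ᐟ² zⁿ / (q;q)ₙ`. Comparing coefficients gives the functional equation
`F(z) = (1 + z) F(qz)`, hence `F(z) = (-z;q)_N F(qᴺ z)` for every `N`. As `N → ∞` the first
factor tends to `(-z;q)_∞` and, by dominated convergence, `F(qᴺ z) → F(0) = 1`.
-/

/-- Finite q-Pochhammer symbol: (a;q)_n = ∏_{k=0}^{n-1} (1 - a q^k). -/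
noncomputable def qp (a q : ℂ) (n : ℕ) : ℂ := ∏ k ∈ Finset.range n, (1 - a * q ^ k)

/-- Infinite q-Pochhammer symbol: (a;q)_∞ = ∏_{k=0}^∞ (1 - a q^k). -/
noncomputable def qpInf (a q : ℂ) : ℂ := ∏' k : ℕ, (1 - a * q ^ k)

open Filter Topology

lemma qp_zero (a q : ℂ) : qp a q 0 = 1 :=
  Finset.prod_range_zero _

lemma qp_succ (a q : ℂ) (n : ℕ) : qp a q (n + 1) = qp a q n * (1 - a * q ^ n) :=
  Finset.prod_range_succ _ _

lemma one_sub_norm_le_norm_one_sub_pow_succ {R : Type*} [NormedRing R] [NormOneClass R] {q : R}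
    (hq : ‖q‖ ≤ 1) (n : ℕ) : 1 - ‖q‖ ≤ ‖1 - q ^ (n + 1)‖ :=
  calc 1 - ‖q‖ ≤ 1 - ‖q ^ (n + 1)‖ := by
        gcongr
        exact (norm_pow_le' q n.succ_pos).trans (pow_le_of_le_one (norm_nonneg q) hq n.succ_ne_zero)
    _ ≤ ‖1 - q ^ (n + 1)‖ := by simpa using norm_sub_norm_le (1 : R) (q ^ (n + 1))

lemma tendsto_qp_qpInf (a : ℂ) {q : ℂ} (hq : ‖q‖ < 1) :
    Tendsto (qp a q) atTop (𝓝 (qpInf a q)) := by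
  have hsum : Summable fun k : ℕ => ‖-(a * q ^ k)‖ := by
    simpa [norm_mul, norm_pow] using (summable_geometric_of_lt_one (norm_nonneg q) hq).mul_left ‖a‖
  have hmul : Multipliable fun k : ℕ => 1 - a * q ^ k := by
    simpa [sub_eq_add_neg] using multipliable_one_add_of_summable hsum
  exact hmul.hasProd.tendsto_prod_nat

section EulerSeries

variable {q : ℂ}

lemma one_sub_pow_succ_ne_zero (hq : ‖q‖ < 1) (n : ℕ) : 1 - q ^ (n + 1) ≠ 0 := by
  rw [← norm_pos_iff]
  linarith [one_sub_norm_le_norm_one_sub_pow_succ hq.le n]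

lemma qp_self_ne_zero (hq : ‖q‖ < 1) (n : ℕ) : qp q q n ≠ 0 :=
  Finset.prod_ne_zero_iff.2 fun k _ => by simpa [pow_succ'] using one_sub_pow_succ_ne_zero hq k

noncomputable def eulerTerm (q z : ℂ) (n : ℕ) : ℂ := q ^ (n * (n - 1) / 2) * z ^ n / qp q q n

noncomputable def eulerSeries (q z : ℂ) : ℂ := ∑' n, eulerTerm q z n

lemma eulerTerm_mul_left (q c z : ℂ) (n : ℕ) : eulerTerm q (c * z) n = c ^ n * eulerTerm q z n := by
  simp only [eulerTerm, mul_pow]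
  ring

lemma eulerTerm_succ_mul (hq : ‖q‖ < 1) (z : ℂ) (n : ℕ) :
    eulerTerm q z (n + 1) * (1 - q ^ (n + 1)) = q ^ n * z * eulerTerm q z n := by
  have hsucc := one_sub_pow_succ_ne_zero hq n
  rw [pow_succ] at hsucc
  simp only [eulerTerm, qp_succ, Nat.triangle_succ, pow_add, pow_succ, mul_comm q]
  field_simp

lemma norm_eulerTerm_succ_le (hq : ‖q‖ < 1) (z : ℂ) (n : ℕ) :
    ‖eulerTerm q z (n + 1)‖ ≤ ‖q‖ ^ n * ‖z‖ / (1 - ‖q‖) * ‖eulerTerm q z n‖ := by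
  have hgap : 1 - ‖q‖ ≤ ‖1 - q ^ (n + 1)‖ := one_sub_norm_le_norm_one_sub_pow_succ hq.le n
  have hrec := congrArg norm (eulerTerm_succ_mul hq z n)
  rw [norm_mul, norm_mul, norm_mul, norm_pow] at hrec
  rw [div_mul_eq_mul_div, le_div_iff₀ (by linarith), ← hrec]
  gcongr

lemma summable_norm_eulerTerm (hq : ‖q‖ < 1) (z : ℂ) : Summable fun n => ‖eulerTerm q z n‖ := by
  have hratio : Tendsto (fun n => ‖q‖ ^ n * ‖z‖ / (1 - ‖q‖)) atTop (𝓝 0) := by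
    simpa using ((tendsto_pow_atTop_nhds_zero_of_lt_one (norm_nonneg q) hq).mul_const ‖z‖).div_const
      (1 - ‖q‖)
  refine summable_of_ratio_norm_eventually_le (r := 1 / 2) (by norm_num) ?_
  filter_upwards [hratio.eventually_le_const (by norm_num : (0 : ℝ) < 1 / 2)] with n hn
  simp only [norm_norm]
  calc ‖eulerTerm q z (n + 1)‖ ≤ ‖q‖ ^ n * ‖z‖ / (1 - ‖q‖) * ‖eulerTerm q z n‖ :=
        norm_eulerTerm_succ_le hq z n
    _ ≤ 1 / 2 * ‖eulerTerm q z n‖ := by gcongr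

lemma hasSum_eulerTerm (hq : ‖q‖ < 1) (z : ℂ) : HasSum (eulerTerm q z) (eulerSeries q z) :=
  (summable_norm_eulerTerm hq z).of_norm.hasSum

lemma eulerSeries_eq_one_add_mul (hq : ‖q‖ < 1) (z : ℂ) :
    eulerSeries q z = (1 + z) * eulerSeries q (q * z) := by
  have hdiff : HasSum (fun n => eulerTerm q z n * (1 - q ^ n))
      (eulerSeries q z - eulerSeries q (q * z)) := by
    simpa [eulerTerm_mul_left, mul_sub, mul_comm] using
      (hasSum_eulerTerm hq z).sub (hasSum_eulerTerm hq (q * z))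
  have hshift : HasSum (fun n => z * eulerTerm q (q * z) n)
      (eulerSeries q z - eulerSeries q (q * z)) := by
    rw [← hasSum_nat_add_iff' 1] at hdiff
    simpa [eulerTerm_succ_mul hq, eulerTerm_mul_left, mul_comm, mul_left_comm] using hdiff
  linear_combination hshift.unique ((hasSum_eulerTerm hq (q * z)).mul_left z)

lemma eulerSeries_eq_qp_mul (hq : ‖q‖ < 1) (z : ℂ) (N : ℕ) :
    eulerSeries q z = qp (-z) q N * eulerSeries q (q ^ N * z) := by
  induction N with
  | zero => simp [qp_zero]
  | succ N ih =>
    rw [ih, eulerSeries_eq_one_add_mul hq, qp_succ, pow_succ', mul_assoc q]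
    ring

lemma tendsto_eulerSeries_nhds_zero (hq : ‖q‖ < 1) : Tendsto (eulerSeries q) (𝓝 0) (𝓝 1) := by
  have hzero : ∑' n, eulerTerm q 0 n = 1 := by
    rw [tsum_eq_single 0 fun n hn => by simp [eulerTerm, hn]]
    simp [eulerTerm, qp_zero]
  rw [← hzero]
  refine tendsto_tsum_of_dominated_convergence (summable_norm_eulerTerm hq 1)
    (fun n => (by unfold eulerTerm; fun_prop : Continuous fun w => eulerTerm q w n).tendsto 0) ?_
  filter_upwards [Metric.closedBall_mem_nhds (0 : ℂ) one_pos] with w hw n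
  rw [← mul_one w, eulerTerm_mul_left, norm_mul, norm_pow]
  exact mul_le_of_le_one_left (norm_nonneg _) (pow_le_one₀ (norm_nonneg _) (by simpa using hw))

end EulerSeries

/-- Euler's second identity. -/
theorem euler_second_identity (q : ℂ) (hq : ‖q‖ < 1) (z : ℂ) :
    HasSum (fun n : ℕ => q ^ (n * (n - 1) / 2) * z ^ n / qp q q n) (qpInf (-z) q) := by
  have hscaled : Tendsto (fun N => eulerSeries q (q ^ N * z)) atTop (𝓝 1) :=
    (tendsto_eulerSeries_nhds_zero hq).comp
      (by simpa using (tendsto_pow_atTop_nhds_zero_of_norm_lt_one hq).mul_const z)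
  have hlim : Tendsto (fun N => qp (-z) q N * eulerSeries q (q ^ N * z)) atTop
      (𝓝 (qpInf (-z) q)) := by
    simpa using (tendsto_qp_qpInf (-z) hq).mul hscaled
  have hvalue : eulerSeries q z = qpInf (-z) q := by
    refine tendsto_nhds_unique ?_ hlim
    simp only [← eulerSeries_eq_qp_mul hq z]
    exact tendsto_const_nhds
  exact hvalue ▸ hasSum_eulerTerm hq z
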